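/- arXiv:2103.17140 — 2 statements merged into one kernel-verified Lean document; each statement's English description precedes it below -/
import Mathlib

section
/- For every oriented graph G and every arc xy of G, χo(G) ≤ χo(G − xy) + 2; that is, removing a single arc decreases the oriented chromatic number by at most 2. -/
/-- An oriented graph: a directed graph whose arc relation is irreflexive and
antisymmetric (no loops, and never both arcs `xy` and `yx`). -/
structure OrientedGraph (V : Type) where
  adj : V → V → Prop
  irrefl : ∀ v, ¬ adj v v
  antisymm : ∀ u v, adj u v → ¬ adj v u

namespace OrientedGraph

variable {V : Type}

/-- An oriented `k`-colouring of `G`. -/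
def IsColoring (G : OrientedGraph V) {k : ℕ} (φ : V → Fin k) : Prop :=
  (∀ x y, G.adj x y → φ x ≠ φ y) ∧
  (∀ x y u v, G.adj x y → G.adj u v → φ x = φ v → φ y ≠ φ u)

/-- The oriented chromatic number: the least `k` admitting an oriented `k`-colouring. -/
noncomputable def chromNum (G : OrientedGraph V) : ℕ :=
  sInf {k : ℕ | ∃ φ : V → Fin k, G.IsColoring φ}

/-- `G` with the arc `xy` removed. -/
def deleteArc (G : OrientedGraph V) (x y : V) : OrientedGraph V where
  adj a b := G.adj a b ∧ ¬(a = x ∧ b = y)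
  irrefl v h := G.irrefl v h.1
  antisymm u v h h' := G.antisymm u v h.1 h'.1

/-- An absolute oriented clique: `χo(G) = |V(G)|`. -/
def IsAbsoluteClique (G : OrientedGraph V) : Prop :=
  G.chromNum = Nat.card V

/-- A deeply critical oriented graph: removing any arc drops `χo` by exactly 2. -/
def IsDeeplyCritical (G : OrientedGraph V) : Prop :=
  ∀ x y, G.adj x y → (G.deleteArc x y).chromNum = G.chromNum - 2

/-- A deeply critical oriented clique. -/
def IsDeeplyCriticalClique (G : OrientedGraph V) : Prop :=
  G.IsDeeplyCritical ∧ G.IsAbsoluteClique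

/-- An extending partition `X 0 ⊔ X 1 ⊔ X 2` of `G` (indices mod 3). -/
def IsExtendingPartition (G : OrientedGraph V) (X : Fin 3 → Set V) : Prop :=
  (∀ v : V, ∃! i : Fin 3, v ∈ X i) ∧
  (∀ i : Fin 3, ∀ u ∈ X (i + 1), ∀ v ∈ X i, ¬ G.adj u v) ∧
  (∀ i : Fin 3, ∀ u ∈ X i, ∃ v ∈ X (i + 1), {w | w ∈ X i ∧ G.adj w v} = {u}) ∧
  (∀ i : Fin 3, ∀ v ∈ X (i + 1), ∃ u ∈ X i, {w | w ∈ X (i + 1) ∧ G.adj u w} = {v})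

/-- An oriented graph is extendable when it admits an extending partition. -/
def Extendable (G : OrientedGraph V) : Prop :=
  ∃ X : Fin 3 → Set V, G.IsExtendingPartition X

/-- Induced subgraph on the vertices satisfying `P`. -/
def induce (G : OrientedGraph V) (P : V → Prop) : OrientedGraph {v // P v} where
  adj a b := G.adj a.1 b.1
  irrefl a := G.irrefl a.1
  antisymm a b h := G.antisymm a.1 b.1 h

end OrientedGraph

/-- The new vertex `xᵢ⁻` of the 6-extension (for `i ∈ Fin 3`, representing `X_{i+1}`). -/
abbrev xminus (i : Fin 3) : Fin 6 := ⟨2 * i.1, by omega⟩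

/-- The new vertex `xᵢ⁺` of the 6-extension. -/
abbrev xplus (i : Fin 3) : Fin 6 := ⟨2 * i.1 + 1, by omega⟩

/-- The arcs among the six new vertices:
`x₁⁻x₂⁺, x₁⁺x₂⁻, x₂⁻x₃⁺, x₂⁺x₃⁻, x₃⁻x₁⁺, x₃⁺x₁⁻`. -/
abbrev extraAdj (s t : Fin 6) : Prop :=
  ∃ i : Fin 3, (s = xminus i ∧ t = xplus (i + 1)) ∨ (s = xplus i ∧ t = xminus (i + 1))

lemma extra_irrefl : ∀ s : Fin 6, ¬ extraAdj s s := by decide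

lemma extra_antisymm : ∀ s t : Fin 6, extraAdj s t → ¬ extraAdj t s := by decide

/-- The 6-extension of `G` with respect to the partition `X`. -/
def sixExtension {V : Type} (G : OrientedGraph V) (X : Fin 3 → Set V) :
    OrientedGraph (V ⊕ Fin 6) where
  adj a b :=
    match a, b with
    | Sum.inl u, Sum.inl v => G.adj u v
    | Sum.inr s, Sum.inl v => ∃ i : Fin 3, s = xminus i ∧ v ∈ X i
    | Sum.inl u, Sum.inr s => ∃ i : Fin 3, s = xplus i ∧ u ∈ X i
    | Sum.inr s, Sum.inr t => extraAdj s t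
  irrefl v := by
    cases v with
    | inl u => exact G.irrefl u
    | inr s => exact extra_irrefl s
  antisymm a b h h' := by
    cases a with
    | inl u =>
      cases b with
      | inl v => exact G.antisymm u v h h'
      | inr s =>
        obtain ⟨i, hi, -⟩ := h
        obtain ⟨j, hj, -⟩ := h'
        have := congrArg Fin.val (hi.symm.trans hj)
        simp at this
        omega
    | inr s =>
      cases b with
      | inl v =>
        obtain ⟨i, hi, -⟩ := h
        obtain ⟨j, hj, -⟩ := h'
        have := congrArg Fin.val (hi.symm.trans hj)
        simp at this
        omega
      | inr t => exact extra_antisymm s t h h'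

/-- The 4-extension of `G`: the subgraph of the 6-extension induced by deleting
`x₁⁺` and `x₂⁻`. -/
def fourExtension {V : Type} (G : OrientedGraph V) (X : Fin 3 → Set V) :
    OrientedGraph {v : V ⊕ Fin 6 // v ≠ Sum.inr (xplus 0) ∧ v ≠ Sum.inr (xminus 1)} :=
  (sixExtension G X).induce _

/-- The 2-extension of `G`: the subgraph of the 6-extension induced by deleting
`x₁⁻`, `x₂⁺`, `x₃⁻` and `x₃⁺`. -/
def twoExtension {V : Type} (G : OrientedGraph V) (X : Fin 3 → Set V) :
    OrientedGraph {v : V ⊕ Fin 6 //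
      v ≠ Sum.inr (xminus 0) ∧ v ≠ Sum.inr (xplus 1) ∧
      v ≠ Sum.inr (xminus 2) ∧ v ≠ Sum.inr (xplus 2)} :=
  (sixExtension G X).induce _

/-- The oriented circulant graph `C(n, S)`: vertex set `ZMod n`, with an arc from `i`
to `j` whenever `j - i ∈ S`. -/
def circulant (n : ℕ) (S : Set (ZMod n)) (hS : ∀ k : ZMod n, k ∈ S → -k ∉ S) :
    OrientedGraph (ZMod n) where
  adj i j := j - i ∈ S
  irrefl i h := hS (i - i) h (by simpa using h)
  antisymm i j h h' := hS (j - i) h (by simpa [neg_sub] using h')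

/-!
Give `x` and `y` two fresh colours and keep an optimal colouring of `G − xy` elsewhere. The arc
`xy` can only break condition (ii) together with an arc `yx`, which antisymmetry rules out, so
the result is an oriented colouring of `G` with two more colours.
-/

namespace OrientedGraph

variable {V : Type} {G H : OrientedGraph V} {k m : ℕ}

theorem IsColoring.mono (hHG : ∀ a b, H.adj a b → G.adj a b) {φ : V → Fin k}
    (hφ : G.IsColoring φ) : H.IsColoring φ :=
  ⟨fun a b hab => hφ.1 a b (hHG a b hab),
    fun a b u v hab huv => hφ.2 a b u v (hHG a b hab) (hHG u v huv)⟩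

theorem IsColoring.of_refines {φ : V → Fin k} {ψ : V → Fin m} (hφ : G.IsColoring φ)
    (hψ : ∀ a b, ψ a = ψ b → φ a = φ b) : G.IsColoring ψ :=
  ⟨fun a b hab e => hφ.1 a b hab (hψ a b e),
    fun a b u v hab huv eav ebu => hφ.2 a b u v hab huv (hψ a v eav) (hψ b u ebu)⟩

theorem IsColoring.of_deleteArc {x y : V} {φ : V → Fin k}
    (hφ : (G.deleteArc x y).IsColoring φ)
    (hx : ∀ a, φ a = φ x → a = x) (hy : ∀ a, φ a = φ y → a = y) : G.IsColoring φ := by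
  refine ⟨fun a b hab eab => ?_, fun a b u v hab huv eav ebu => ?_⟩
  · by_cases hxy : a = x ∧ b = y
    · obtain ⟨rfl, rfl⟩ := hxy
      exact G.irrefl a (hy a eab ▸ hab)
    · exact hφ.1 a b ⟨hab, hxy⟩ eab
  · by_cases hab' : a = x ∧ b = y
    · obtain ⟨rfl, rfl⟩ := hab'
      exact G.antisymm a b hab (hx v eav.symm ▸ hy u ebu.symm ▸ huv)
    by_cases huv' : u = x ∧ v = y
    · obtain ⟨rfl, rfl⟩ := huv'
      exact G.antisymm u v huv (hy a eav ▸ hx b ebu ▸ hab)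
    exact hφ.2 a b u v ⟨hab, hab'⟩ ⟨huv, huv'⟩ eav ebu

def recolorFresh [DecidableEq V] (φ : V → Fin k) (x y : V) (v : V) : Fin (k + 2) :=
  if v = x then Fin.last (k + 1)
  else if v = y then (Fin.last k).castSucc
  else (φ v).castSucc.castSucc

theorem recolorFresh_eq_recolorFresh [DecidableEq V] {φ : V → Fin k} {x y a b : V}
    (h : recolorFresh φ x y a = recolorFresh φ x y b) :
    a = b ∨ (a ≠ x ∧ a ≠ y ∧ b ≠ x ∧ b ≠ y ∧ φ a = φ b) := by
  unfold recolorFresh at h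
  split_ifs at h <;> simp_all [Fin.ext_iff] <;> omega

theorem IsColoring.recolorFresh_of_deleteArc [DecidableEq V] {x y : V} {φ : V → Fin k}
    (hφ : (G.deleteArc x y).IsColoring φ) : G.IsColoring (recolorFresh φ x y) := by
  have unique (c : V) (hc : c = x ∨ c = y) (a : V)
      (h : recolorFresh φ x y a = recolorFresh φ x y c) : a = c := by
    rcases recolorFresh_eq_recolorFresh h with h | h
    exacts [h, by tauto]
  refine (hφ.of_refines fun a b h => ?_).of_deleteArc (unique x (.inl rfl)) (unique y (.inr rfl))
  rcases recolorFresh_eq_recolorFresh h with rfl | h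
  exacts [rfl, h.2.2.2.2]

theorem chromNum_le_of_isColoring {φ : V → Fin k} (hφ : G.IsColoring φ) : G.chromNum ≤ k :=
  Nat.sInf_le ⟨φ, hφ⟩

theorem exists_isColoring_chromNum (hG : ∃ k, ∃ φ : V → Fin k, G.IsColoring φ) :
    ∃ φ : V → Fin G.chromNum, G.IsColoring φ :=
  Nat.sInf_mem hG

end OrientedGraph

theorem stmt16_general {V : Type} (G : OrientedGraph V) (x y : V) :
    G.chromNum ≤ (G.deleteArc x y).chromNum + 2 := by
  classical
  by_cases hcol : ∃ k, ∃ φ : V → Fin k, (G.deleteArc x y).IsColoring φ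
  · obtain ⟨φ, hφ⟩ := OrientedGraph.exists_isColoring_chromNum hcol
    exact OrientedGraph.chromNum_le_of_isColoring hφ.recolorFresh_of_deleteArc
  · -- With no colouring at all, `chromNum` takes the junk value `sInf ∅ = 0`.
    have hG : G.chromNum = 0 := by
      refine Nat.sInf_eq_zero.2 (.inr (Set.eq_empty_of_forall_notMem fun k ⟨φ, hφ⟩ => ?_))
      exact hcol ⟨k, φ, hφ.mono fun _ _ (h : (G.deleteArc x y).adj _ _) => h.1⟩
    omega

/-- removing a single arc decreases the oriented chromatic number by at
most 2. -/
theorem stmt16 {V : Type} [Finite V] (G : OrientedGraph V) (x y : V) (h : G.adj x y) :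
    G.chromNum ≤ (G.deleteArc x y).chromNum + 2 :=
  stmt16_general G x y
end

section
/- An oriented graph G is an absolute oriented clique if and only if every pair of distinct non-adjacent vertices of G is connected by a 2-dipath in at least one direction. -/
/-!
Two vertices joined by an arc or by a 2-dipath receive distinct colours in every oriented
colouring, so under the 2-dipath condition every colouring is injective and `χo(G) = |V(G)|`.
Conversely, two distinct vertices that are non-adjacent and joined by no 2-dipath in either
direction can be given the same colour, which yields an oriented colouring with `|V(G)| - 1`
colours.
-/

namespace OrientedGraph

variable {V : Type} (G : OrientedGraph V)

theorem IsColoring.of_injective {k : ℕ} {φ : V → Fin k} (hφ : Function.Injective φ) :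
    G.IsColoring φ := by
  refine ⟨fun x y hxy h ↦ G.irrefl x (hφ h ▸ hxy), fun x y u v hxy huv hxv hyu ↦ ?_⟩
  obtain rfl := hφ hxv
  obtain rfl := hφ hyu
  exact G.antisymm _ _ hxy huv

variable {G}

theorem IsColoring.ne_of_adj {k : ℕ} {φ : V → Fin k} (hφ : G.IsColoring φ) {x y : V}
    (h : G.adj x y) : φ x ≠ φ y :=
  hφ.1 x y h

theorem IsColoring.ne_of_adj_of_adj {k : ℕ} {φ : V → Fin k} (hφ : G.IsColoring φ)
    {x w y : V} (hxw : G.adj x w) (hwy : G.adj w y) : φ x ≠ φ y :=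
  fun h ↦ hφ.2 x w w y hxw hwy h rfl

theorem IsColoring.of_identify_pair {k : ℕ} {φ : V → Fin k} {u v : V}
    (huv : ¬ G.adj u v) (hvu : ¬ G.adj v u)
    (hpath_uv : ∀ w, G.adj u w → ¬ G.adj w v) (hpath_vu : ∀ w, G.adj v w → ¬ G.adj w u)
    (hφ : ∀ x y, φ x = φ y → x = y ∨ s(x, y) = s(u, v)) : G.IsColoring φ := by
  simp only [Sym2.eq_iff] at hφ
  refine ⟨fun x y hxy h ↦ ?_, fun x y a b hxy hab hxb hya ↦ ?_⟩
  · rcases hφ x y h with rfl | ⟨rfl, rfl⟩ | ⟨rfl, rfl⟩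
    exacts [G.irrefl x hxy, huv hxy, hvu hxy]
  · rcases hφ x b hxb with rfl | ⟨rfl, rfl⟩ | ⟨rfl, rfl⟩ <;>
      rcases hφ y a hya with rfl | ⟨rfl, rfl⟩ | ⟨rfl, rfl⟩
    exacts [G.antisymm _ _ hxy hab, hpath_vu _ hab hxy, hpath_uv _ hab hxy, hpath_uv _ hxy hab,
      G.irrefl _ hxy, huv hxy, hpath_vu _ hxy hab, hvu hxy, G.irrefl _ hxy]

theorem IsColoring.injective {k : ℕ} {φ : V → Fin k} (hφ : G.IsColoring φ)
    (h : ∀ u v : V, u ≠ v → ¬ G.adj u v → ¬ G.adj v u →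
      (∃ w, G.adj u w ∧ G.adj w v) ∨ (∃ w, G.adj v w ∧ G.adj w u)) :
    Function.Injective φ := by
  intro x y hxy
  by_contra hne
  by_cases hadj : G.adj x y
  · exact hφ.ne_of_adj hadj hxy
  by_cases hadj' : G.adj y x
  · exact hφ.ne_of_adj hadj' hxy.symm
  rcases h x y hne hadj hadj' with ⟨w, hxw, hwy⟩ | ⟨w, hyw, hwx⟩
  exacts [hφ.ne_of_adj_of_adj hxw hwy hxy, hφ.ne_of_adj_of_adj hyw hwx hxy.symm]

variable [Finite V]

theorem chromNum_le_card (G : OrientedGraph V) : G.chromNum ≤ Nat.card V :=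
  Nat.sInf_le ⟨_, IsColoring.of_injective G (Finite.equivFin V).injective⟩

theorem card_le_chromNum_of_forall_injective
    (h : ∀ (k : ℕ) (φ : V → Fin k), G.IsColoring φ → Function.Injective φ) :
    Nat.card V ≤ G.chromNum :=
  le_csInf ⟨_, _, IsColoring.of_injective G (Finite.equivFin V).injective⟩
    fun k ⟨φ, hφ⟩ ↦ (Nat.card_le_card_of_injective φ (h k φ hφ)).trans (Nat.card_fin k).le

theorem chromNum_lt_card {u v : V} (hne : u ≠ v) (huv : ¬ G.adj u v) (hvu : ¬ G.adj v u)
    (hpath_uv : ∀ w, G.adj u w → ¬ G.adj w v) (hpath_vu : ∀ w, G.adj v w → ¬ G.adj w u) :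
    G.chromNum < Nat.card V := by
  classical
  have hcard : Nat.card {w // w ≠ v} = Nat.card V - 1 := by
    have := Fintype.ofFinite V
    simp only [Nat.card_eq_fintype_card, Fintype.card_subtype_compl, Fintype.card_subtype_eq]
  let merge : V → {w // w ≠ v} := fun x ↦ if h : x = v then ⟨u, hne⟩ else ⟨x, h⟩
  have hmerge : ∀ x y, merge x = merge y → x = y ∨ s(x, y) = s(u, v) := by
    intro x y h
    unfold merge at h
    split_ifs at h <;> simp_all [Subtype.ext_iff]
  have hle : G.chromNum ≤ Nat.card V - 1 :=
    Nat.sInf_le ⟨(Finite.equivFinOfCardEq hcard) ∘ merge,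
      .of_identify_pair huv hvu hpath_uv hpath_vu
        fun x y h ↦ hmerge x y ((Finite.equivFinOfCardEq hcard).injective h)⟩
  have : 0 < Nat.card V := Nat.card_pos_iff.2 ⟨⟨u⟩, inferInstance⟩
  omega

end OrientedGraph

/-- an oriented graph is an absolute oriented clique iff every pair of
distinct non-adjacent vertices is connected by a 2-dipath in at least one direction. -/
theorem stmt17 {V : Type} [Finite V] (G : OrientedGraph V) :
    G.IsAbsoluteClique ↔
      ∀ u v : V, u ≠ v → ¬ G.adj u v → ¬ G.adj v u →
        (∃ w, G.adj u w ∧ G.adj w v) ∨ (∃ w, G.adj v w ∧ G.adj w u) := by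
  constructor
  · intro hclique u v hne huv hvu
    by_contra! hpath
    exact (G.chromNum_lt_card hne huv hvu hpath.1 hpath.2).ne hclique
  · intro h
    exact G.chromNum_le_card.antisymm
      (G.card_le_chromNum_of_forall_injective fun _ _ hφ ↦ hφ.injective h)
end
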